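/- Let n ≥ 2, ℓ ≥ 1, and let Γ : ({0,1}^ℓ)^n → ℂ be a blockwise symmetric matchgate signature of arity nℓ whose matrix form M(Γ) has rank at least 3. Suppose σ, τ ∈ {0,1}^ℓ are such that wt(σ) and wt(τ) have the same parity, the rows M(Γ)^σ and M(Γ)^τ are linearly independent, and wt(σ+τ) = min { wt(u+v) : u, v ∈ {0,1}^ℓ, wt(u) and wt(v) have the same parity, and M(Γ)^u, M(Γ)^v are linearly independent }. Then wt(σ+τ) = 2. -/

import Mathlib

open Finset

namespace Matchgate

/-- Bitwise XOR of two bit strings. -/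
def bxor {m : ℕ} (a b : Fin m → Bool) : Fin m → Bool := fun i => Bool.xor (a i) (b i)

/-- The bit string `e_p` with a `1` in position `p` and `0` elsewhere. -/
def unit {m : ℕ} (p : Fin m) : Fin m → Bool := fun i => decide (i = p)

/-- Hamming weight of a bit string. -/
def wt {m : ℕ} (a : Fin m → Bool) : ℕ := (Finset.univ.filter fun i => a i = true).card

/-- Total Hamming weight of a blockwise bit string. -/
def wtB {n ℓ : ℕ} (α : Fin n → Fin ℓ → Bool) : ℕ := ∑ j, wt (α j)

/-- Blockwise XOR. -/
def bxorB {n ℓ : ℕ} (α β : Fin n → Fin ℓ → Bool) : Fin n → Fin ℓ → Bool :=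
  fun j => bxor (α j) (β j)

/-- The parity bit `p(a) = wt(a) mod 2` of a bit string, as a `Bool`. -/
def pB {m : ℕ} (a : Fin m → Bool) : Bool := decide (wt a % 2 = 1)

/-- A blockwise signature (blocks of size `ℓ`, `n` blocks) is blockwise symmetric if it is
invariant under every permutation of its blocks. -/
def BlockSym {n ℓ : ℕ} (Γ : (Fin n → Fin ℓ → Bool) → ℂ) : Prop :=
  ∀ (σ : Equiv.Perm (Fin n)) (α : Fin n → Fin ℓ → Bool), Γ (α ∘ σ) = Γ α

/-- The parity condition for a blockwise signature: either all even entries vanish or all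
odd entries vanish. -/
def ParityCond {n ℓ : ℕ} (Γ : (Fin n → Fin ℓ → Bool) → ℂ) : Prop :=
  (∀ α, wtB α % 2 = 0 → Γ α = 0) ∨ (∀ α, wtB α % 2 = 1 → Γ α = 0)

/-- The Matchgate Identities for a blockwise signature.  Positions are pairs `(j, i)`
(block `j`, bit `i` within the block) ordered lexicographically block-major, which is the
order of the flattened bit string `α₁α₂⋯αₙ`.  For every pattern `α` and every position set
`P`, the alternating sum `Σ_{p ∈ P} (-1)^{rank of p in P} Γ(α + e_p) Γ(α + P + e_p)`
vanishes. -/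
def MGI {n ℓ : ℕ} (Γ : (Fin n → Fin ℓ → Bool) → ℂ) : Prop :=
  ∀ (α : Fin n → Fin ℓ → Bool) (P : Finset (Fin n × Fin ℓ)),
    ∑ p ∈ P,
      (-1 : ℂ) ^ (P.filter fun q => q.1 < p.1 ∨ (q.1 = p.1 ∧ q.2 ≤ p.2)).card *
        Γ (fun j i => Bool.xor (α j i) (decide ((j, i) = p))) *
        Γ (fun j i => Bool.xor (α j i)
            (Bool.xor (decide ((j, i) ∈ P)) (decide ((j, i) = p)))) = 0

/-- Prepend an element to a length `n - 1` tuple, giving a length `n` tuple. -/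
def cons0 {n : ℕ} {X : Type*} (a : X) (b : Fin (n - 1) → X) : Fin n → X :=
  fun j => if h : (j : ℕ) = 0 then a else b ⟨(j : ℕ) - 1, by have := j.isLt; omega⟩

/-- The matrix form `M(Γ)` of a blockwise signature: rows indexed by the first block,
columns by the remaining `n - 1` blocks. -/
def matrixForm {n ℓ : ℕ} (Γ : (Fin n → Fin ℓ → Bool) → ℂ) :
    Matrix (Fin ℓ → Bool) (Fin (n - 1) → Fin ℓ → Bool) ℂ :=
  Matrix.of fun a b => Γ (cons0 a b)

/-- XOR block `j` of `α` with `c`, leaving the other blocks unchanged. -/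
def flipBlock {n ℓ : ℕ} (α : Fin n → Fin ℓ → Bool) (j : Fin n) (c : Fin ℓ → Bool) :
    Fin n → Fin ℓ → Bool := Function.update α j (bxor (α j) c)

/-- Insert block `c` at position `t` into a tuple of `n - 1` blocks. -/
def insertAt {n ℓ : ℕ} (t : Fin n) (c : Fin ℓ → Bool) (β : Fin (n - 1) → Fin ℓ → Bool) :
    Fin n → Fin ℓ → Bool :=
  fun j =>
    if h1 : (j : ℕ) = (t : ℕ) then c
    else if h2 : (j : ℕ) < (t : ℕ) then
      β ⟨(j : ℕ), by have := t.isLt; have := j.isLt; omega⟩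
    else β ⟨(j : ℕ) - 1, by have := t.isLt; have := j.isLt; omega⟩

/-- The parity condition for a flat (Boolean-bit) signature. -/
def ParityCond1 {m : ℕ} (Γ : (Fin m → Bool) → ℂ) : Prop :=
  (∀ α, wt α % 2 = 0 → Γ α = 0) ∨ (∀ α, wt α % 2 = 1 → Γ α = 0)

/-- The Matchgate Identities for a flat (Boolean-bit) signature. -/
def MGI1 {m : ℕ} (Γ : (Fin m → Bool) → ℂ) : Prop :=
  ∀ (α : Fin m → Bool) (P : Finset (Fin m)),
    ∑ p ∈ P,
      (-1 : ℂ) ^ (P.filter fun q => q ≤ p).card *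
        Γ (fun k => Bool.xor (α k) (decide (k = p))) *
        Γ (fun k => Bool.xor (α k) (Bool.xor (decide (k ∈ P)) (decide (k = p)))) = 0

/-!
Let `D` be the set of positions where `σ` and `τ` differ, so that `τ = σ + D` (`flipOn σ D`);
`|D|` is even and nonzero. Suppose `|D| ≥ 4`. By minimality, any two rows of equal parity at
Hamming distance `< |D|` are dependent. Hence each row `σ + e_r + e_s` (`r ≠ s` in `D`) vanishes,
being parallel to both `M^σ` and `M^τ`; and for `p ∈ D` the rows `σ + e_p` and `τ + e_p` are
parallel, since both are parallel to `σ + e_q` for another `q ∈ D` (if that row vanishes, the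
pair `σ + e_q`, `τ + e_q` is trivially dependent and we use `q` instead of `p`).

Now apply the MGI to the pattern whose first block is `σ + e_p`, at the positions of `D` in the
first block together with the positions where two column indices `γ`, `γ'` differ. The terms
from the first block collapse to `±Γ(σ, γ) Γ(τ, γ')`, because the rows `σ + e_p + e_b` vanish;
the remaining terms are, by parallelism of `σ + e_p` and `τ + e_p`, a multiple of another MGI
sum and so vanish. Thus `M^σ_γ M^τ_γ' = 0` for all `γ, γ'`, contradicting independence.
-/

open scoped symmDiff

section BitStrings

variable {m : ℕ}

def flipOn (a : Fin m → Bool) (E : Finset (Fin m)) : Fin m → Bool :=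
  fun i => xor (a i) (decide (i ∈ E))

@[simp] lemma flipOn_empty (a : Fin m → Bool) : flipOn a ∅ = a := by
  funext i; simp [flipOn]

lemma flipOn_flipOn (a : Fin m → Bool) (E F : Finset (Fin m)) :
    flipOn (flipOn a E) F = flipOn a (E ∆ F) := by
  funext i
  simp only [flipOn, mem_symmDiff]
  by_cases hE : i ∈ E <;> by_cases hF : i ∈ F <;> simp [hE, hF]

lemma flipOn_support_bxor (a b : Fin m → Bool) : flipOn a {i | bxor a b i = true} = b := by
  funext i
  cases ha : a i <;> cases hb : b i <;> simp [flipOn, bxor, ha, hb]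

lemma wt_bxor_add_two_mul (a b : Fin m → Bool) :
    wt (bxor a b) + 2 * #{i | a i = true ∧ b i = true} = wt a + wt b := by
  simp only [wt, card_filter, mul_sum, ← sum_add_distrib]
  refine sum_congr rfl fun i _ => ?_
  cases ha : a i <;> cases hb : b i <;> simp [bxor, ha, hb]

lemma wt_bxor_flipOn_flipOn (a : Fin m → Bool) (E F : Finset (Fin m)) :
    wt (bxor (flipOn a E) (flipOn a F)) = #(E ∆ F) := by
  rw [wt]
  congr 1
  ext i
  simp only [mem_symmDiff, bxor, flipOn]
  by_cases hE : i ∈ E <;> by_cases hF : i ∈ F <;> cases a i <;> simp [hE, hF]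

lemma card_symmDiff_of_subset {E F : Finset (Fin m)} (h : E ⊆ F) : #(E ∆ F) = #F - #E := by
  rw [symmDiff_of_le h, card_sdiff_of_subset h]

lemma singleton_symmDiff_singleton {r b : Fin m} (h : r ≠ b) :
    ({r} : Finset (Fin m)) ∆ {b} = {r, b} := by
  rw [(disjoint_singleton.mpr h).symmDiff_eq_sup, sup_eq_union, insert_eq]

lemma singleton_symmDiff_of_mem {r : Fin m} {D : Finset (Fin m)} (h : r ∈ D) :
    {r} ∆ D = D.erase r := by
  rw [symmDiff_of_le (singleton_subset_iff.mpr h), sdiff_singleton_eq_erase]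

lemma singleton_symmDiff_erase {r : Fin m} {D : Finset (Fin m)} (h : r ∈ D) :
    {r} ∆ D.erase r = D := by
  rw [(disjoint_singleton_left.mpr (notMem_erase r D)).symmDiff_eq_sup, sup_eq_union,
    ← insert_eq, insert_erase h]

end BitStrings

section PairDependence

variable {K V : Type*} [Field K] [AddCommGroup V] [Module K V]

lemma not_linearIndependent_pair_of_not_linearIndependent_pair {x y z : V} (hz : z ≠ 0)
    (hx : ¬ LinearIndependent K ![z, x]) (hy : ¬ LinearIndependent K ![z, y]) :
    ¬ LinearIndependent K ![x, y] := by
  rw [LinearIndependent.pair_iff' hz] at hx hy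
  push Not at hx hy
  obtain ⟨a, rfl⟩ := hx
  obtain ⟨b, rfl⟩ := hy
  intro hxy
  have ha : a ≠ 0 := by
    rintro rfl
    exact hxy.ne_zero 0 (by simp)
  refine (LinearIndependent.pair_iff' (smul_ne_zero ha hz)).mp hxy (b * a⁻¹) ?_
  rw [smul_smul, mul_assoc, inv_mul_cancel₀ ha, mul_one]

end PairDependence

section RowDependence

variable {n ℓ : ℕ}

def RowsDependentBelow (Γ : (Fin n → Fin ℓ → Bool) → ℂ) (σ : Fin ℓ → Bool) (d : ℕ) : Prop :=
  ∀ E F : Finset (Fin ℓ), #(E ∆ F) % 2 = 0 → #(E ∆ F) < d →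
    ¬ LinearIndependent ℂ ![matrixForm Γ (flipOn σ E), matrixForm Γ (flipOn σ F)]

variable {Γ : (Fin n → Fin ℓ → Bool) → ℂ}

lemma rowsDependentBelow_wt_bxor {σ τ : Fin ℓ → Bool}
    (hmin : ∀ u v : Fin ℓ → Bool, wt u % 2 = wt v % 2 →
      LinearIndependent ℂ ![matrixForm Γ u, matrixForm Γ v] → wt (bxor σ τ) ≤ wt (bxor u v)) :
    RowsDependentBelow Γ σ (wt (bxor σ τ)) := by
  intro E F heven hlt hli
  have hEF := wt_bxor_flipOn_flipOn σ E F
  have := wt_bxor_add_two_mul (flipOn σ E) (flipOn σ F)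
  have := hmin _ _ (by omega) hli
  omega

lemma matrixForm_flipOn_pair_eq_zero {σ : Fin ℓ → Bool} {D : Finset (Fin ℓ)}
    (hdep : RowsDependentBelow Γ σ #D)
    (hind : LinearIndependent ℂ ![matrixForm Γ σ, matrixForm Γ (flipOn σ D)])
    (hD : 4 ≤ #D) (hDeven : #D % 2 = 0) {r s : Fin ℓ} (hr : r ∈ D) (hs : s ∈ D) (hrs : r ≠ s) :
    matrixForm Γ (flipOn σ {r, s}) = 0 := by
  by_contra hne
  have hrsD : {r, s} ⊆ D := insert_subset hr (singleton_subset_iff.mpr hs)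
  have hcard := card_pair hrs
  have hempty : ({r, s} : Finset (Fin ℓ)) ∆ ∅ = {r, s} := by rw [← bot_eq_empty, symmDiff_bot]
  refine not_linearIndependent_pair_of_not_linearIndependent_pair hne ?_ ?_ hind
  · simpa using hdep {r, s} ∅ (by rw [hempty, hcard]) (by rw [hempty, hcard]; omega)
  · exact hdep {r, s} D (by rw [card_symmDiff_of_subset hrsD]; omega)
      (by rw [card_symmDiff_of_subset hrsD]; omega)

end RowDependence

section Blocks

variable {n ℓ : ℕ}

def flipAt (α : Fin n → Fin ℓ → Bool) (S : Finset (Fin n × Fin ℓ)) : Fin n → Fin ℓ → Bool :=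
  fun j i => xor (α j i) (decide ((j, i) ∈ S))

def lexRank (S : Finset (Fin n × Fin ℓ)) (p : Fin n × Fin ℓ) : ℕ :=
  #{q ∈ S | q.1 < p.1 ∨ (q.1 = p.1 ∧ q.2 ≤ p.2)}

theorem MGI.sum_flipAt_eq_zero {Γ : (Fin n → Fin ℓ → Bool) → ℂ} (h : MGI Γ)
    (α : Fin n → Fin ℓ → Bool) (S : Finset (Fin n × Fin ℓ)) :
    ∑ p ∈ S, (-1 : ℂ) ^ lexRank S p * Γ (flipAt α {p}) * Γ (flipAt α (S.erase p)) = 0 := by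
  rw [← h α S]
  refine sum_congr rfl fun p hp => ?_
  have hsingle : flipAt α {p} = fun j i => xor (α j i) (decide ((j, i) = p)) := by
    funext j i; simp [flipAt]
  have herase : flipAt α (S.erase p) =
      fun j i => xor (α j i) (xor (decide ((j, i) ∈ S)) (decide ((j, i) = p))) := by
    funext j i
    by_cases hji : (j, i) = p
    · simp [flipAt, hji, hp]
    · simp [flipAt, hji]
  rw [hsingle, herase, lexRank]

lemma lexRank_union {T Q : Finset (Fin n × Fin ℓ)} {p : Fin n × Fin ℓ}
    (hT : ∀ q ∈ T, q.1 < p.1) (hTQ : Disjoint T Q) :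
    lexRank (T ∪ Q) p = #T + lexRank Q p := by
  rw [lexRank, filter_union, card_union_of_disjoint (disjoint_filter_filter hTQ),
    filter_true_of_mem fun q hq => Or.inl (hT q hq), lexRank]

def blockTail (β : Fin n → Fin ℓ → Bool) : Fin (n - 1) → Fin ℓ → Bool :=
  fun k => β ⟨k + 1, by omega⟩

variable [NeZero n]

lemma cons0_zero {X : Type*} (a : X) (b : Fin (n - 1) → X) : cons0 a b 0 = a := by
  simp [cons0]

lemma cons0_blockTail (v : Fin ℓ → Bool) (β : Fin n → Fin ℓ → Bool) :
    cons0 v (blockTail β) = Function.update β 0 v := by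
  funext j
  by_cases hj : j = 0
  · subst hj; simp [cons0]
  · have hj' : (j : ℕ) ≠ 0 := Fin.val_ne_iff.mpr hj
    simp only [cons0, hj', dif_neg, not_false_eq_true, Function.update_of_ne hj, blockTail]
    congr; omega

variable {Γ : (Fin n → Fin ℓ → Bool) → ℂ}

lemma matrixForm_apply_blockTail (v : Fin ℓ → Bool) (β : Fin n → Fin ℓ → Bool) :
    matrixForm Γ v (blockTail β) = Γ (Function.update β 0 v) := by
  rw [matrixForm, Matrix.of_apply, cons0_blockTail]

lemma apply_eq_zero_of_matrixForm_eq_zero {β : Fin n → Fin ℓ → Bool}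
    (h : matrixForm Γ (β 0) = 0) : Γ β = 0 := by
  simpa [matrixForm_apply_blockTail] using congrFun h (blockTail β)

lemma apply_eq_mul_of_matrixForm_eq_smul {β : Fin n → Fin ℓ → Bool} {v : Fin ℓ → Bool} {μ : ℂ}
    (h : matrixForm Γ (β 0) = μ • matrixForm Γ v) : Γ β = μ * Γ (Function.update β 0 v) := by
  simpa [matrixForm_apply_blockTail] using congrFun h (blockTail β)

lemma matrixForm_eq_zero_or_eq_zero {x y : Fin ℓ → Bool}
    (h : ∀ α β : Fin n → Fin ℓ → Bool, α 0 = x → β 0 = y → Γ α * Γ β = 0) :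
    matrixForm Γ x = 0 ∨ matrixForm Γ y = 0 := by
  by_contra! hxy
  obtain ⟨c, hc⟩ := Function.ne_iff.mp hxy.1
  obtain ⟨c', hc'⟩ := Function.ne_iff.mp hxy.2
  exact mul_ne_zero hc hc' (h _ _ (cons0_zero x c) (cons0_zero y c'))

theorem sum_offBlock_eq_zero (hmgi : MGI Γ) (base : Fin n → Fin ℓ → Bool)
    {T Q : Finset (Fin n × Fin ℓ)} (hT : ∀ p ∈ T, p.1 = 0) (hQ : ∀ p ∈ Q, p.1 ≠ 0)
    (hTeven : Even #T)
    (hdep : ¬ LinearIndependent ℂ ![matrixForm Γ (base 0), matrixForm Γ (flipAt base T 0)]) :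
    ∑ p ∈ Q, (-1 : ℂ) ^ lexRank (T ∪ Q) p * Γ (flipAt base {p}) *
      Γ (flipAt base ((T ∪ Q).erase p)) = 0 := by
  have hTQ : Disjoint T Q :=
    disjoint_left.mpr fun p hpT hpQ => hQ p hpQ (hT p hpT)
  have hsingle : ∀ p ∈ Q, flipAt base {p} 0 = base 0 := by
    intro p hp
    funext i
    have : (0, i) ≠ p := fun h => hQ p hp (h ▸ rfl)
    simp [flipAt, this]
  have hrest : ∀ p ∈ Q, flipAt base ((T ∪ Q).erase p) 0 = flipAt base T 0 := by
    intro p hp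
    funext i
    have h1 : (0, i) ≠ p := fun h => hQ p hp (h ▸ rfl)
    have h2 : (0, i) ∉ Q := fun h => hQ _ h rfl
    simp [flipAt, h1, h2]
  have hupdate : ∀ p ∈ Q,
      Function.update (flipAt base ((T ∪ Q).erase p)) 0 (base 0) = flipAt base (Q.erase p) := by
    intro p hp
    funext j i
    by_cases hj : j = 0
    · subst hj
      have h1 : (0, i) ∉ Q.erase p := fun h => hQ _ (mem_of_mem_erase h) rfl
      simp [flipAt, h1]
    · have h1 : (j, i) ∉ T := fun h => hj (hT _ h)
      simp [flipAt, hj, h1]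
  have hsign : ∀ p ∈ Q, (-1 : ℂ) ^ lexRank (T ∪ Q) p = (-1) ^ lexRank Q p := by
    intro p hp
    have hlt : ∀ q ∈ T, q.1 < p.1 := fun q hq => by
      rw [hT q hq]; exact (Fin.pos_iff_ne_zero' _).mpr (hQ p hp)
    rw [lexRank_union hlt hTQ, pow_add, hTeven.neg_one_pow, one_mul]
  by_cases h0 : matrixForm Γ (base 0) = 0
  · refine sum_eq_zero fun p hp => ?_
    exact mul_eq_zero_of_left (mul_eq_zero_of_right _
      (apply_eq_zero_of_matrixForm_eq_zero (by rwa [hsingle p hp]))) _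
  obtain ⟨μ, hμ⟩ : ∃ μ : ℂ, μ • matrixForm Γ (base 0) = matrixForm Γ (flipAt base T 0) := by
    simpa using (LinearIndependent.pair_iff' h0).not.mp hdep
  calc _ = μ * ∑ p ∈ Q, (-1 : ℂ) ^ lexRank Q p * Γ (flipAt base {p}) *
          Γ (flipAt base (Q.erase p)) := by
        rw [mul_sum]
        refine sum_congr rfl fun p hp => ?_
        have hterm : Γ (flipAt base ((T ∪ Q).erase p)) = μ * Γ (flipAt base (Q.erase p)) := by
          rw [← hupdate p hp]
          exact apply_eq_mul_of_matrixForm_eq_smul (by rw [hrest p hp, hμ])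
        rw [hsign p hp, hterm]
        ring
    _ = 0 := by rw [hmgi.sum_flipAt_eq_zero, mul_zero]

theorem apply_mul_apply_eq_zero (hmgi : MGI Γ) (a : Fin ℓ → Bool) {D : Finset (Fin ℓ)}
    (hD : Even #D) {r : Fin ℓ} (hr : r ∈ D)
    (hzero : ∀ b ∈ D, b ≠ r → matrixForm Γ (flipOn a {b}) = 0)
    (hdep : ¬ LinearIndependent ℂ ![matrixForm Γ a, matrixForm Γ (flipOn a D)])
    {α β : Fin n → Fin ℓ → Bool} (hα : α 0 = flipOn a {r}) (hβ : β 0 = flipOn a (D.erase r)) :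
    Γ α * Γ β = 0 := by
  set base := Function.update α 0 a
  set T : Finset (Fin n × Fin ℓ) := D.map (Function.Embedding.sectR 0 (Fin ℓ))
  set Q : Finset (Fin n × Fin ℓ) := {p | p.1 ≠ 0 ∧ α p.1 p.2 ≠ β p.1 p.2}
  have hT : ∀ p ∈ T, p.1 = 0 := by simp [T]
  have hQ : ∀ p ∈ Q, p.1 ≠ 0 := fun p hp => (mem_filter.mp hp).2.1
  have hTQ : Disjoint T Q := disjoint_left.mpr fun p hpT hpQ => hQ p hpQ (hT p hpT)
  have hblock : ∀ S : Finset (Fin ℓ), flipAt base (S.map (Function.Embedding.sectR 0 (Fin ℓ))) 0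
      = flipOn a S := by
    intro S; funext i; simp [flipAt, flipOn, base]
  have hbase : flipAt base {(0, r)} = α := by
    funext j i
    by_cases hj : j = 0
    · subst hj; simp [flipAt, base, hα, flipOn]
    · simp [flipAt, base, hj]
  have hrest : flipAt base ((T ∪ Q).erase (0, r)) = β := by
    funext j i
    by_cases hj : j = 0
    · subst hj
      simp [flipAt, base, hβ, flipOn, T, Q, and_comm]
    · simp [flipAt, base, hj, Ne.symm hj, T, Q]
      cases α j i <;> cases β j i <;> simp
  have hmain := hmgi.sum_flipAt_eq_zero base (T ∪ Q)
  rw [sum_union hTQ, sum_offBlock_eq_zero hmgi base hT hQ (by simpa [T]) ?_, add_zero, sum_map,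
    sum_eq_single_of_mem r hr ?_] at hmain
  · simpa [hbase, hrest] using hmain
  · intro b hb hbr
    refine mul_eq_zero_of_left (mul_eq_zero_of_right _ (apply_eq_zero_of_matrixForm_eq_zero ?_)) _
    rw [← map_singleton, hblock]
    exact hzero b hb hbr
  · rwa [hblock]

theorem matrixForm_eq_zero_or_flipOn_eq_zero (hmgi : MGI Γ) (σ : Fin ℓ → Bool)
    {D : Finset (Fin ℓ)} (hD : Even #D) {r : Fin ℓ} (hr : r ∈ D)
    (hzero : ∀ b ∈ D, b ≠ r → matrixForm Γ (flipOn σ {r, b}) = 0)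
    (hdep : ¬ LinearIndependent ℂ
      ![matrixForm Γ (flipOn σ {r}), matrixForm Γ (flipOn σ (D.erase r))]) :
    matrixForm Γ σ = 0 ∨ matrixForm Γ (flipOn σ D) = 0 := by
  refine matrixForm_eq_zero_or_eq_zero fun α β hα hβ =>
    apply_mul_apply_eq_zero hmgi (flipOn σ {r}) hD hr (fun b hb hbr => ?_) ?_ ?_ ?_
  · rw [flipOn_flipOn, singleton_symmDiff_singleton hbr.symm]
    exact hzero b hb hbr
  · rwa [flipOn_flipOn, singleton_symmDiff_of_mem hr]
  · rw [hα, flipOn_flipOn, symmDiff_self, bot_eq_empty, flipOn_empty]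
  · rw [hβ, flipOn_flipOn, singleton_symmDiff_erase hr]

variable {σ : Fin ℓ → Bool} {D : Finset (Fin ℓ)}

lemma linearIndependent_flipOn_singleton_erase (hmgi : MGI Γ) (hdep : RowsDependentBelow Γ σ #D)
    (hind : LinearIndependent ℂ ![matrixForm Γ σ, matrixForm Γ (flipOn σ D)])
    (hD : 4 ≤ #D) (hDeven : #D % 2 = 0) {r : Fin ℓ} (hr : r ∈ D) :
    LinearIndependent ℂ ![matrixForm Γ (flipOn σ {r}), matrixForm Γ (flipOn σ (D.erase r))] := by
  by_contra hpair
  rcases matrixForm_eq_zero_or_flipOn_eq_zero hmgi σ (Nat.even_iff.mpr hDeven) hr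
    (fun b hb hbr => matrixForm_flipOn_pair_eq_zero hdep hind hD hDeven hr hb hbr.symm) hpair
    with h | h
  · exact hind.ne_zero 0 h
  · exact hind.ne_zero 1 h

lemma card_lt_four (hmgi : MGI Γ) (hdep : RowsDependentBelow Γ σ #D)
    (hind : LinearIndependent ℂ ![matrixForm Γ σ, matrixForm Γ (flipOn σ D)])
    (hDeven : #D % 2 = 0) : #D < 4 := by
  by_contra! hD
  obtain ⟨p, hp, q, hq, hpq⟩ := one_lt_card.mp (by omega : 1 < #D)
  have hkey := fun r (hr : r ∈ D) =>
    linearIndependent_flipOn_singleton_erase hmgi hdep hind hD hDeven hr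
  by_cases hq0 : matrixForm Γ (flipOn σ {q}) = 0
  · exact (hkey q hq).ne_zero 0 hq0
  have hqp : #({q} ∆ {p}) = 2 := by rw [singleton_symmDiff_singleton hpq.symm, card_pair hpq.symm]
  have hqD : {q} ⊆ D.erase p := singleton_subset_iff.mpr (mem_erase.mpr ⟨hpq.symm, hq⟩)
  have hqDcard : #({q} ∆ D.erase p) = #D - 2 := by
    rw [card_symmDiff_of_subset hqD, card_erase_of_mem hp, card_singleton]; omega
  refine not_linearIndependent_pair_of_not_linearIndependent_pair hq0 ?_ ?_ (hkey p hp)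
  · exact hdep {q} {p} (by omega) (by omega)
  · exact hdep {q} (D.erase p) (by omega) (by omega)

end Blocks

theorem stmt5_general (n ℓ : ℕ) (hn : 2 ≤ n)
    (Γ : (Fin n → Fin ℓ → Bool) → ℂ)
    (hmgi : MGI Γ)
    (σ τ : Fin ℓ → Bool)
    (hpp : wt σ % 2 = wt τ % 2)
    (hind : LinearIndependent ℂ ![matrixForm Γ σ, matrixForm Γ τ])
    (hmin : ∀ u v : Fin ℓ → Bool, wt u % 2 = wt v % 2 →
      LinearIndependent ℂ ![matrixForm Γ u, matrixForm Γ v] →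
      wt (bxor σ τ) ≤ wt (bxor u v)) :
    wt (bxor σ τ) = 2 := by
  have : NeZero n := ⟨by omega⟩
  set D : Finset (Fin ℓ) := {i | bxor σ τ i = true}
  have hτ : flipOn σ D = τ := flipOn_support_bxor σ τ
  have hwt : wt (bxor σ τ) = #D := rfl
  have hDeven : #D % 2 = 0 := by
    have := wt_bxor_add_two_mul σ τ
    omega
  have hD0 : #D ≠ 0 := by
    rw [Ne, card_eq_zero]
    intro hD
    rw [hD, flipOn_empty] at hτ
    exact hind.injective.ne zero_ne_one (by simp [hτ])
  have hdep : RowsDependentBelow Γ σ #D := hwt ▸ rowsDependentBelow_wt_bxor hmin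
  have := card_lt_four hmgi hdep (hτ ▸ hind) hDeven
  omega

/-- for a blockwise symmetric matchgate signature with `rank M(Γ) ≥ 3`, a
weight-minimal pair of linearly independent rows of equal weight parity differs in exactly
two bits. -/
theorem stmt5 (n ℓ : ℕ) (hn : 2 ≤ n) (hℓ : 1 ≤ ℓ)
    (Γ : (Fin n → Fin ℓ → Bool) → ℂ)
    (hsym : BlockSym Γ) (hpar : ParityCond Γ) (hmgi : MGI Γ)
    (hrank : 3 ≤ (matrixForm Γ).rank)
    (σ τ : Fin ℓ → Bool)
    (hpp : wt σ % 2 = wt τ % 2)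
    (hind : LinearIndependent ℂ ![matrixForm Γ σ, matrixForm Γ τ])
    (hmin : ∀ u v : Fin ℓ → Bool, wt u % 2 = wt v % 2 →
      LinearIndependent ℂ ![matrixForm Γ u, matrixForm Γ v] →
      wt (bxor σ τ) ≤ wt (bxor u v)) :
    wt (bxor σ τ) = 2 :=
  stmt5_general n ℓ hn Γ hmgi σ τ hpp hind hmin

end Matchgate
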